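/- Let ν>0, let f:[0,ν]→ℝ be Lipschitz continuous with Lipschitz constant C_f, convex, and satisfy f(0)=0. Let A, B be non-negative self-adjoint trace-class operators on a separable Hilbert space with A+B ≤ ν·Id. Then Tr f(A+B) ≤ Tr f(A) + C_f · Tr B. -/

import Mathlib

/-!
Put `p j k = ⟪g j, h k⟫ ^ 2`; by Parseval in both bases this is a doubly stochastic matrix, and
expanding `g j` in the eigenbasis `h` gives `⟪g j, A g j⟫ = ∑ k, p j k * a k`, while
`⟪g j, A g j⟫ = μ j - ⟪g j, B g j⟫`. The Lipschitz bound costs `Cf * ⟪g j, B g j⟫` in passing from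
`f (μ j)` to `f (⟪g j, A g j⟫)`, Jensen's inequality along row `j` bounds the latter by
`∑ k, p j k * f (a k)`, and summing over `j` with column sums `1` leaves `∑ k, f (a k)`.
-/

open Filter Topology Set NNReal
open scoped RealInnerProductSpace

section Jensen

variable {ι E : Type*} [NormedAddCommGroup E] [NormedSpace ℝ E] {s : Set E} {f : E → ℝ}
  {t : Finset ι} {w : ι → ℝ} {p : ι → E}

theorem Convex.sum_mem_of_zero_mem (hs : Convex ℝ s) (h0 : (0 : E) ∈ s)
    (hw₀ : ∀ i ∈ t, 0 ≤ w i) (hw₁ : ∑ i ∈ t, w i ≤ 1) (hp : ∀ i ∈ t, p i ∈ s) :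
    ∑ i ∈ t, w i • p i ∈ s := by
  have := hs.sum_mem (t := t.insertNone) (w := fun j => j.elim (1 - ∑ i ∈ t, w i) w)
    (z := fun j => j.elim 0 p) (Finset.forall_mem_insertNone.2 ⟨sub_nonneg.2 hw₁, hw₀⟩)
    (by simp) (Finset.forall_mem_insertNone.2 ⟨h0, hp⟩)
  simpa using this

theorem ConvexOn.map_sum_le_of_sum_le_one (hf : ConvexOn ℝ s f) (h0 : (0 : E) ∈ s)
    (hf0 : f 0 = 0) (hw₀ : ∀ i ∈ t, 0 ≤ w i) (hw₁ : ∑ i ∈ t, w i ≤ 1) (hp : ∀ i ∈ t, p i ∈ s) :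
    f (∑ i ∈ t, w i • p i) ≤ ∑ i ∈ t, w i • f (p i) := by
  simpa [hf0] using hf.map_add_sum_le hw₀ (sub_add_cancel _ _) hp (sub_nonneg.2 hw₁) h0

/-- `f 0 = 0` lets each finite partial sum be completed by the point `0` into a genuine convex
combination. -/
theorem ConvexOn.map_tsum_le_of_map_zero (hf : ConvexOn ℝ s f) (hfc : ContinuousOn f s)
    (hs : IsClosed s) (h0 : (0 : E) ∈ s) (hf0 : f 0 = 0) (hw₀ : ∀ i, 0 ≤ w i)
    (hw₁ : HasSum w 1) (hp : ∀ i, p i ∈ s) {x : E} (hx : HasSum (fun i => w i • p i) x)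
    (hfp : Summable fun i => w i • f (p i)) :
    f x ≤ ∑' i, w i • f (p i) := by
  have partial_le_one (t : Finset ι) : ∑ i ∈ t, w i ≤ 1 :=
    sum_le_hasSum t (fun i _ => hw₀ i) hw₁
  have partial_mem (t : Finset ι) : ∑ i ∈ t, w i • p i ∈ s :=
    hf.1.sum_mem_of_zero_mem h0 (fun i _ => hw₀ i) (partial_le_one t) (fun i _ => hp i)
  have hxs : x ∈ s := hs.mem_of_tendsto hx (.of_forall partial_mem)
  have hfx : Tendsto (fun t : Finset ι => f (∑ i ∈ t, w i • p i)) atTop (𝓝 (f x)) :=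
    (hfc x hxs).tendsto.comp (tendsto_nhdsWithin_iff.2 ⟨hx, .of_forall partial_mem⟩)
  exact le_of_tendsto_of_tendsto' hfx hfp.hasSum fun t =>
    hf.map_sum_le_of_sum_le_one h0 hf0 (fun i _ => hw₀ i) (partial_le_one t) (fun i _ => hp i)

end Jensen

section Lipschitz

variable {ι E F : Type*} [NormedAddCommGroup E] [NormedAddCommGroup F] {s : Set E}
  {f : E → F} {K : ℝ≥0}

theorem LipschitzOnWith.norm_le_mul (hf : LipschitzOnWith K f s) (h0 : (0 : E) ∈ s)
    (hf0 : f 0 = 0) {x : E} (hx : x ∈ s) : ‖f x‖ ≤ K * ‖x‖ := by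
  simpa [hf0] using hf.dist_le_mul x hx 0 h0

theorem LipschitzOnWith.summable_comp [CompleteSpace F] (hf : LipschitzOnWith K f s)
    (h0 : (0 : E) ∈ s) (hf0 : f 0 = 0) {x : ι → E} (hxs : ∀ i, x i ∈ s)
    (hx : Summable fun i => ‖x i‖) : Summable fun i => f (x i) :=
  .of_norm_bounded (hx.mul_left (K : ℝ)) fun i => hf.norm_le_mul h0 hf0 (hxs i)

theorem LipschitzOnWith.tsum_le_tsum_add_mul {α : Type*} [PseudoMetricSpace α] {s : Set α}
    {f : α → ℝ} (hf : LipschitzOnWith K f s) {x y : ι → α} (hxs : ∀ i, x i ∈ s)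
    (hys : ∀ i, y i ∈ s) (hfx : Summable fun i => f (x i)) (hfy : Summable fun i => f (y i))
    (hxy : Summable fun i => dist (x i) (y i)) :
    ∑' i, f (x i) ≤ ∑' i, f (y i) + K * ∑' i, dist (x i) (y i) := by
  have := hfx.tsum_le_tsum (fun i => hf.le_add_mul (hxs i) (hys i))
    (hfy.add (hxy.mul_left (K : ℝ)))
  rwa [hfy.tsum_add (hxy.mul_left (K : ℝ)), hxy.tsum_mul_left] at this

end Lipschitz

section DoublyStochastic

variable {ι κ : Type*} {ν : ℝ} {f : ℝ → ℝ} {K : ℝ≥0} {p : ι → κ → ℝ} {a : κ → ℝ}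

theorem ConvexOn.tsum_le_tsum_of_doublyStochastic (hν : 0 ≤ ν) (hconv : ConvexOn ℝ (Icc 0 ν) f)
    (hlip : LipschitzOnWith K f (Icc 0 ν)) (hf0 : f 0 = 0) (hp₀ : ∀ j k, 0 ≤ p j k)
    (hrow : ∀ j, HasSum (p j) 1) (hcol : ∀ k, HasSum (fun j => p j k) 1)
    (ha : ∀ k, a k ∈ Icc 0 ν) {α : ι → ℝ} (hpa : ∀ j, HasSum (fun k => p j k * a k) (α j))
    (hα : Summable α) :
    ∑' j, f (α j) ≤ ∑' k, f (a k) := by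
  have h0 : (0 : ℝ) ∈ Icc 0 ν := ⟨le_rfl, hν⟩
  have hpa₀ (j : ι) (k : κ) : 0 ≤ p j k * a k := mul_nonneg (hp₀ j k) (ha k).1
  have hαs (j : ι) : α j ∈ Icc 0 ν :=
    ⟨(hpa j).nonneg (hpa₀ j), hasSum_le (fun k => mul_le_mul_of_nonneg_left (ha k).2 (hp₀ j k))
      (hpa j) (by simpa using (hrow j).mul_right ν)⟩
  have hG : Summable fun q : ι × κ => p q.1 q.2 * a q.2 :=
    (summable_prod_of_nonneg fun q => hpa₀ q.1 q.2).2
      ⟨fun j => (hpa j).summable, hα.congr fun j => ((hpa j).tsum_eq).symm⟩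
  have hF : Summable fun q : ι × κ => p q.1 q.2 * f (a q.2) := by
    refine .of_norm_bounded (hG.mul_left (K : ℝ)) fun q => ?_
    rw [norm_mul, Real.norm_of_nonneg (hp₀ _ _), mul_left_comm]
    exact mul_le_mul_of_nonneg_left
      ((hlip.norm_le_mul h0 hf0 (ha _)).trans_eq (by rw [Real.norm_of_nonneg (ha _).1]))
      (hp₀ _ _)
  calc ∑' j, f (α j)
      ≤ ∑' j, ∑' k, p j k * f (a k) :=
        (hlip.summable_comp h0 hf0 hαs hα.abs).tsum_le_tsum
          (fun j => hconv.map_tsum_le_of_map_zero hlip.continuousOn isClosed_Icc h0 hf0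
            (hp₀ j) (hrow j) ha (hpa j) (hF.prod_factor j))
          hF.prod
    _ = ∑' k, f (a k) := by
        rw [← hF.tsum_comm]
        exact tsum_congr fun k => by simpa using ((hcol k).mul_right (f (a k))).tsum_eq

theorem ConvexOn.tsum_le_tsum_add_mul_of_doublyStochastic (hν : 0 ≤ ν)
    (hconv : ConvexOn ℝ (Icc 0 ν) f) (hlip : LipschitzOnWith K f (Icc 0 ν)) (hf0 : f 0 = 0)
    (hp₀ : ∀ j k, 0 ≤ p j k) (hrow : ∀ j, HasSum (p j) 1) (hcol : ∀ k, HasSum (fun j => p j k) 1)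
    (ha : ∀ k, a k ∈ Icc 0 ν) {μ β : ι → ℝ} (hμ : ∀ j, μ j ∈ Icc 0 ν) (hβ : ∀ j, 0 ≤ β j)
    (hpa : ∀ j, HasSum (fun k => p j k * a k) (μ j - β j)) (hμs : Summable μ)
    (hβs : Summable β) :
    ∑' j, f (μ j) ≤ ∑' k, f (a k) + K * ∑' j, β j := by
  have h0 : (0 : ℝ) ∈ Icc 0 ν := ⟨le_rfl, hν⟩
  have hμβ (j : ι) : μ j - β j ∈ Icc 0 ν :=
    ⟨(hpa j).nonneg fun k => mul_nonneg (hp₀ j k) (ha k).1, by linarith [(hμ j).2, hβ j]⟩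
  have hdist (j : ι) : dist (μ j) (μ j - β j) = β j := by
    rw [Real.dist_eq, sub_sub_cancel, abs_of_nonneg (hβ j)]
  calc ∑' j, f (μ j)
      ≤ ∑' j, f (μ j - β j) + K * ∑' j, dist (μ j) (μ j - β j) :=
        hlip.tsum_le_tsum_add_mul hμ hμβ (hlip.summable_comp h0 hf0 hμ hμs.abs)
          (hlip.summable_comp h0 hf0 hμβ (hμs.sub hβs).abs) (by simpa only [hdist] using hβs)
    _ ≤ ∑' k, f (a k) + K * ∑' j, β j := by
        simp only [hdist]
        gcongr
        exact hconv.tsum_le_tsum_of_doublyStochastic hν hlip hf0 hp₀ hrow hcol ha hpa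
          (hμs.sub hβs)

end DoublyStochastic

section HilbertBasis

variable {ι E : Type*} [NormedAddCommGroup E] [InnerProductSpace ℝ E]

theorem real_inner_apply_self_of_apply_eq_smul {T : E → E} {x : E} {c : ℝ} (hx : ‖x‖ = 1)
    (hTx : T x = c • x) : ⟪x, T x⟫ = c := by
  rw [hTx, real_inner_smul_right, real_inner_self_eq_norm_sq, hx, one_pow, mul_one]

theorem HilbertBasis.hasSum_inner_sq (b : HilbertBasis ι ℝ E) (x : E) :
    HasSum (fun i => ⟪x, b i⟫ ^ 2) (‖x‖ ^ 2) := by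
  simpa only [real_inner_comm x, ← sq, real_inner_self_eq_norm_sq] using
    b.hasSum_inner_mul_inner x x

theorem HilbertBasis.hasSum_inner_sq_mul_of_apply_eq_smul (b : HilbertBasis ι ℝ E)
    {T : E →ₗ[ℝ] E} (hT : T.IsSymmetric) {a : ι → ℝ} (hTb : ∀ i, T (b i) = a i • b i) (x : E) :
    HasSum (fun i => ⟪x, b i⟫ ^ 2 * a i) ⟪x, T x⟫ := by
  have term_eq (i : ι) : ⟪x, b i⟫ * ⟪b i, T x⟫ = ⟪x, b i⟫ ^ 2 * a i := by
    rw [← hT, hTb, real_inner_smul_left, real_inner_comm x]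
    ring
  simpa only [term_eq] using b.hasSum_inner_mul_inner x (T x)

end HilbertBasis

theorem pekar_stmt0_general {E : Type*} [NormedAddCommGroup E] [InnerProductSpace ℝ E]
    [CompleteSpace E]
    (ν : ℝ) (hν : 0 < ν) (f : ℝ → ℝ) (Cf : NNReal)
    (hf0 : f 0 = 0)
    (hconv : ConvexOn ℝ (Set.Icc 0 ν) f)
    (hlip : LipschitzOnWith Cf f (Set.Icc 0 ν))
    (A B : E →L[ℝ] E)
    (hA : IsSelfAdjoint A)
    (hApos : ∀ x : E, 0 ≤ ⟪x, A x⟫) (hBpos : ∀ x : E, 0 ≤ ⟪x, B x⟫)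
    (hbound : ∀ x : E, ⟪x, (A + B) x⟫ ≤ ν * ‖x‖ ^ 2)
    (g : HilbertBasis ℕ ℝ E) (μ : ℕ → ℝ)
    (hg : ∀ j, (A + B) (g j) = μ j • (g j : E))
    (h : HilbertBasis ℕ ℝ E) (a : ℕ → ℝ)
    (hh : ∀ j, A (h j) = a j • (h j : E))
    (htrAB : Summable μ)
    (htrB : Summable fun j => ⟪(g j : E), B (g j)⟫) :
    ∑' j, f (μ j) ≤ ∑' j, f (a j) + Cf * ∑' j, ⟪(g j : E), B (g j)⟫ := by
  have inner_add_apply (x : E) : ⟪x, (A + B) x⟫ = ⟪x, A x⟫ + ⟪x, B x⟫ := inner_add_right _ _ _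
  have le_of_unit (x : E) (hx : ‖x‖ = 1) : ⟪x, (A + B) x⟫ ≤ ν := by simpa [hx] using hbound x
  have hμ (j : ℕ) : ⟪(g j : E), (A + B) (g j)⟫ = μ j :=
    real_inner_apply_self_of_apply_eq_smul (g.orthonormal.1 j) (hg j)
  have ha (k : ℕ) : ⟪(h k : E), A (h k)⟫ = a k :=
    real_inner_apply_self_of_apply_eq_smul (h.orthonormal.1 k) (hh k)
  have hμ_mem (j : ℕ) : μ j ∈ Icc 0 ν := by
    refine ⟨?_, hμ j ▸ le_of_unit _ (g.orthonormal.1 j)⟩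
    rw [← hμ, inner_add_apply]
    exact add_nonneg (hApos _) (hBpos _)
  have ha_mem (k : ℕ) : a k ∈ Icc 0 ν := by
    refine ⟨ha k ▸ hApos _, ?_⟩
    linarith [le_of_unit _ (h.orthonormal.1 k), inner_add_apply (h k), hBpos (h k), ha k]
  have hdiag (j : ℕ) :
      HasSum (fun k => ⟪(g j : E), h k⟫ ^ 2 * a k) (μ j - ⟪(g j : E), B (g j)⟫) := by
    have := h.hasSum_inner_sq_mul_of_apply_eq_smul hA.isSymmetric hh (g j)
    rw [ContinuousLinearMap.coe_coe] at this
    convert this using 1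
    linarith [inner_add_apply (g j), hμ j]
  exact hconv.tsum_le_tsum_add_mul_of_doublyStochastic hν.le hlip hf0 (fun _ _ => sq_nonneg _)
    (fun j => by simpa [g.orthonormal.1 j] using h.hasSum_inner_sq (g j))
    (fun k => by simpa [real_inner_comm, h.orthonormal.1 k] using g.hasSum_inner_sq (h k))
    ha_mem hμ_mem (fun j => hBpos _) hdiag htrAB htrB

/-- **Lemma 7.3.** Let `f : [0,ν] → ℝ` be Lipschitz (with constant `Cf`), convex,
with `f 0 = 0`. Let `A, B` be non-negative self-adjoint trace-class operators on a
separable Hilbert space with `A + B ≤ ν·Id`. Then `Tr f(A+B) ≤ Tr f(A) + Cf · Tr B`.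
The traces of `f(A+B)` and `f(A)` are expressed via orthonormal eigenbases `g`, `h`
of the trace-class operators `A+B` and `A` with eigenvalue sequences `μ` and `a`,
and `Tr B` via the basis `g`. -/
theorem pekar_stmt0 {E : Type*} [NormedAddCommGroup E] [InnerProductSpace ℝ E]
    [CompleteSpace E]
    (ν : ℝ) (hν : 0 < ν) (f : ℝ → ℝ) (Cf : NNReal)
    (hf0 : f 0 = 0)
    (hconv : ConvexOn ℝ (Set.Icc 0 ν) f)
    (hlip : LipschitzOnWith Cf f (Set.Icc 0 ν))
    (A B : E →L[ℝ] E)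
    (hA : IsSelfAdjoint A) (hB : IsSelfAdjoint B)
    (hApos : ∀ x : E, 0 ≤ ⟪x, A x⟫) (hBpos : ∀ x : E, 0 ≤ ⟪x, B x⟫)
    (hbound : ∀ x : E, ⟪x, (A + B) x⟫ ≤ ν * ‖x‖ ^ 2)
    (g : HilbertBasis ℕ ℝ E) (μ : ℕ → ℝ)
    (hg : ∀ j, (A + B) (g j) = μ j • (g j : E))
    (h : HilbertBasis ℕ ℝ E) (a : ℕ → ℝ)
    (hh : ∀ j, A (h j) = a j • (h j : E))
    (htrAB : Summable μ) (htrA : Summable a)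
    (htrB : Summable fun j => ⟪(g j : E), B (g j)⟫) :
    ∑' j, f (μ j) ≤ ∑' j, f (a j) + Cf * ∑' j, ⟪(g j : E), B (g j)⟫ :=
  pekar_stmt0_general ν hν f Cf hf0 hconv hlip A B hA hApos hBpos hbound g μ hg h a hh htrAB htrB
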